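/- Let X be a Banach space and K, L ⊆ X* nonempty w*-compact sets. For every ε > 0, o_w(H^{K+L}_ε) ≤ o_w(H^K_{ε/2}) ⊕ o_w(H^L_{ε/2}), where ⊕ is the Hessenberg (natural) sum of ordinals. -/

import Mathlib

/-!
Rank each finite sequence `s` of a tree `H` by `ρ_H(s)`, the least `ξ` with `s ∉ H^(ξ)`; the ranks
of members of `H` are successor ordinals. If `f = g + h` with `g ∈ K`, `h ∈ L` is at least `ε` on
`t`, then `t` splits into the letters where `g ≥ ε/2` and those where `h ≥ ε/2`. By induction on
`γ`, every `t` in the `γ`-th weak derivative of such shuffles has a splitting `(s, u)` with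
`γ < ρ(s) ⊕ ρ(u)`: at a successor step one weak neighbourhood makes the rank of every sublist of
`t` drop when it is extended, so whichever side the new letter joins, one summand drops strictly;
at a limit step there are only finitely many splittings and their rank sums are not limits.
-/

open NormedSpace

noncomputable def derivIter {α : Type*} (d : Set α → Set α) (K : Set α) : Ordinal → Set α :=
  fun ξ => Ordinal.limitRecOn ξ K (fun _ ih => d ih)
    (fun o _ ih => ⋂ ζ : Set.Iio o, ih ζ.1 ζ.2)

/-- The `D`-derivative of a set of finite sequences. -/
def derivD {Λ : Type*} (D : Set (Set Λ)) (H : Set (List Λ)) : Set (List Λ) :=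
  {t ∈ H | ∀ U ∈ D, ∃ x ∈ U, t ++ [x] ∈ H}

/-- The canonical basis of weak neighborhoods of `0` in `X`. -/
def weakBasis (X : Type*) [NormedAddCommGroup X] [NormedSpace ℝ X] : Set (Set X) :=
  {U | ∃ (F : Finset (StrongDual ℝ X)) (δ : ℝ), 0 < δ ∧ U = {x | ∀ f ∈ F, |f x| < δ}}

/-- The hereditary tree `H^K_ε` of finite sequences in the unit ball of `X` on which
some member of `K` is everywhere at least `ε`. -/
def HKtree {X : Type*} [NormedAddCommGroup X] [NormedSpace ℝ X]
    (K : Set (StrongDual ℝ X)) (ε : ℝ) : Set (List X) :=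
  {t | (∀ x ∈ t, ‖x‖ ≤ 1) ∧ ∃ f ∈ K, ∀ x ∈ t, ε ≤ f x}

/-- `o_D(H)`: least ordinal where the iterated `D`-derivative is empty (`0` if none). -/
noncomputable def ordD {Λ : Type*} (D : Set (Set Λ)) (H : Set (List Λ)) : Ordinal :=
  sInf {ξ | derivIter (derivD D) H ξ = ∅}

open scoped Pointwise

/-- Natural (Hessenberg) sum of ordinals, as formerly defined in Mathlib's
`Mathlib.SetTheory.Ordinal.NaturalOps` (removed since). -/
noncomputable def Ordinal.nadd.{u} : Ordinal.{u} → Ordinal.{u} → Ordinal.{u}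
  | a, b =>
    max (Ordinal.blsub.{u, u} a fun a' _ => Ordinal.nadd a' b)
      (Ordinal.blsub.{u, u} b fun b' _ => Ordinal.nadd a b')
termination_by a b => (a, b)
decreasing_by
  · exact Prod.Lex.left _ _ ‹_›
  · exact Prod.Lex.right _ ‹_›

namespace Ordinal

theorem nadd_lt_nadd_left {b c : Ordinal} (h : b < c) (a : Ordinal) : nadd a b < nadd a c := by
  conv_rhs => rw [nadd]
  exact lt_max_of_lt_right (lt_blsub (fun c' _ => nadd a c') b h)

theorem nadd_lt_nadd_right {b c : Ordinal} (h : b < c) (a : Ordinal) : nadd b a < nadd c a := by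
  conv_rhs => rw [nadd]
  exact lt_max_of_lt_left (lt_blsub (fun b' _ => nadd b' a) b h)

theorem nadd_le_nadd_left {b c : Ordinal} (h : b ≤ c) (a : Ordinal) : nadd a b ≤ nadd a c :=
  (StrictMono.monotone fun _ _ h => nadd_lt_nadd_left h a) h

theorem nadd_le_nadd_right {b c : Ordinal} (h : b ≤ c) (a : Ordinal) : nadd b a ≤ nadd c a :=
  (StrictMono.monotone fun _ _ h => nadd_lt_nadd_right h a) h

theorem nadd_le_nadd {a b c d : Ordinal} (hab : a ≤ b) (hcd : c ≤ d) : nadd a c ≤ nadd b d :=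
  (nadd_le_nadd_right hab c).trans (nadd_le_nadd_left hcd b)

theorem le_nadd_right (a b : Ordinal) : a ≤ nadd a b :=
  StrictMono.le_apply (f := (nadd · b)) fun _ _ h => nadd_lt_nadd_right h b

theorem nadd_succ (a b : Ordinal) : nadd a (Order.succ b) = Order.succ (nadd a b) := by
  induction a using WellFoundedLT.induction with
  | ind a IH =>
    refine le_antisymm ?_ (Order.succ_le_of_lt (nadd_lt_nadd_left (Order.lt_succ b) a))
    rw [nadd, max_le_iff, blsub_le_iff, blsub_le_iff]
    refine ⟨fun a' ha' => ?_, fun c hc => ?_⟩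
    · rw [IH a' ha', Order.succ_lt_succ_iff]
      exact nadd_lt_nadd_right ha' b
    · exact Order.lt_succ_iff.mpr (nadd_le_nadd_left (Order.lt_succ_iff.mp hc) a)

theorem not_isSuccLimit_nadd_succ (a b : Ordinal) : ¬Order.IsSuccLimit (nadd a (Order.succ b)) := by
  rw [nadd_succ]
  exact Order.not_isSuccLimit_succ _

theorem exists_lt_of_isSuccLimit {ι : Type*} {P : Set ι} {F : ι → Ordinal}
    (hfin : (F '' P).Finite) (hF : ∀ i ∈ P, ¬Order.IsSuccLimit (F i)) {γ : Ordinal}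
    (hγ : Order.IsSuccLimit γ) (h : ∀ ζ < γ, ∃ i ∈ P, ζ < F i) : ∃ i ∈ P, γ < F i := by
  obtain ⟨i, hiP, -⟩ := h 0 hγ.bot_lt
  obtain ⟨i, hiP, himax⟩ := Set.Finite.exists_maximalFor' F P hfin ⟨i, hiP⟩
  refine ⟨i, hiP, lt_of_le_of_ne (not_lt.mp fun hlt => ?_) fun hγi => hF i hiP (hγi ▸ hγ)⟩
  obtain ⟨j, hjP, hij⟩ := h _ hlt
  exact hij.not_ge (himax hjP hij.le)

end Ordinal

section DerivIter

variable {α : Type*} (d : Set α → Set α) (K : Set α)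

theorem derivIter_zero : derivIter d K 0 = K :=
  Ordinal.limitRecOn_zero _ _ _

theorem derivIter_succ (ξ : Ordinal) : derivIter d K (Order.succ ξ) = d (derivIter d K ξ) := by
  rw [Order.succ_eq_add_one]
  exact Ordinal.limitRecOn_add_one _ _ _ _

theorem derivIter_limit {ξ : Ordinal} (h : Order.IsSuccLimit ξ) :
    derivIter d K ξ = ⋂ ζ : Set.Iio ξ, derivIter d K ζ.1 :=
  Ordinal.limitRecOn_limit _ _ _ _ h

variable {d K}

theorem derivIter_antitone (hd : ∀ H, d H ⊆ H) : Antitone (derivIter d K) := by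
  intro ζ ξ hζξ
  induction ξ using Ordinal.limitRecOn with
  | zero => rw [nonpos_iff_eq_zero.mp hζξ]
  | add_one ξ ih =>
    rw [← Order.succ_eq_add_one] at hζξ ⊢
    rcases hζξ.lt_or_eq with h | rfl
    · rw [derivIter_succ]
      exact (hd _).trans (ih (Order.lt_succ_iff.mp h))
    · rfl
  | limit ξ hξ _ =>
    rcases hζξ.lt_or_eq with h | rfl
    · rw [derivIter_limit d K hξ]
      exact Set.iInter_subset_of_subset ⟨ζ, h⟩ subset_rfl
    · rfl

theorem derivIter_mono (hd : Monotone d) {K' : Set α} (hK : K ⊆ K') (ξ : Ordinal) :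
    derivIter d K ξ ⊆ derivIter d K' ξ := by
  induction ξ using Ordinal.limitRecOn with
  | zero => rwa [derivIter_zero, derivIter_zero]
  | add_one ξ ih => rw [← Order.succ_eq_add_one, derivIter_succ, derivIter_succ]; exact hd ih
  | limit ξ hξ ih =>
    rw [derivIter_limit d K hξ, derivIter_limit d K' hξ]
    exact Set.iInter_mono fun ζ => ih ζ.1 ζ.2

end DerivIter

section DerivD

variable {Λ : Type*} (D : Set (Set Λ))

theorem derivD_subset (H : Set (List Λ)) : derivD D H ⊆ H := fun _ ht => ht.1

theorem derivD_monotone : Monotone (derivD D) := by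
  rintro H H' hH t ⟨htH, hext⟩
  refine ⟨hH htH, fun U hU => ?_⟩
  obtain ⟨x, hxU, hx⟩ := hext U hU
  exact ⟨x, hxU, hH hx⟩

end DerivD

universe u

section DerivRank

variable {Λ : Type*}

/-- Junk value `0` when `s` lies in every iterated derivative (`sInf ∅ = 0`). -/
noncomputable def derivRank (D : Set (Set Λ)) (H : Set (List Λ)) (s : List Λ) : Ordinal.{u} :=
  sInf {ξ | s ∉ derivIter (derivD D) H ξ}

variable {D : Set (Set Λ)} {H : Set (List Λ)} {α : Ordinal.{u}}

theorem derivRank_le (hα : derivIter (derivD D) H α = ∅) (s : List Λ) : derivRank D H s ≤ α :=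
  csInf_le' (by simp [hα])

theorem notMem_derivIter_derivRank (hα : derivIter (derivD D) H α = ∅) (s : List Λ) :
    s ∉ derivIter (derivD D) H (derivRank D H s : Ordinal.{u}) :=
  csInf_mem (s := {ξ : Ordinal.{u} | s ∉ derivIter (derivD D) H ξ}) ⟨α, by simp [hα]⟩

theorem mem_derivIter_iff_lt_derivRank (hα : derivIter (derivD D) H α = ∅) {s : List Λ}
    {ξ : Ordinal.{u}} : s ∈ derivIter (derivD D) H ξ ↔ ξ < derivRank D H s := by
  refine ⟨fun hs => lt_of_not_ge fun h => ?_, fun h => not_not.mp (notMem_of_lt_csInf' h)⟩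
  exact notMem_derivIter_derivRank hα s (derivIter_antitone (derivD_subset D) h hs)

theorem derivRank_pos (hα : derivIter (derivD D) H α = ∅) {s : List Λ} (hs : s ∈ H) :
    (0 : Ordinal.{u}) < derivRank D H s := by
  rwa [← mem_derivIter_iff_lt_derivRank hα, derivIter_zero]

theorem exists_derivRank_eq_succ (hα : derivIter (derivD D) H α = ∅) {s : List Λ} (hs : s ∈ H) :
    ∃ ξ : Ordinal.{u}, derivRank D H s = Order.succ ξ := by
  rcases Ordinal.zero_or_succ_or_isSuccLimit (derivRank D H s) with h | h | h
  · exact absurd h (derivRank_pos hα hs).ne'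
  · obtain ⟨ξ, hξ⟩ := h
    exact ⟨ξ, hξ.symm⟩
  · refine absurd ?_ (notMem_derivIter_derivRank hα s)
    rw [derivIter_limit _ _ h, Set.mem_iInter]
    exact fun ζ => (mem_derivIter_iff_lt_derivRank hα).mpr ζ.2

theorem exists_mem_forall_derivRank_concat_lt (hα : derivIter (derivD D) H α = ∅) {s : List Λ}
    (hs : s ∈ H) : ∃ U ∈ D, ∀ x ∈ U, (derivRank D H (s ++ [x]) : Ordinal.{u}) < derivRank D H s := by
  obtain ⟨ξ, hξ⟩ := exists_derivRank_eq_succ hα hs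
  have hsξ : s ∈ derivIter (derivD D) H ξ := by
    rw [mem_derivIter_iff_lt_derivRank hα, hξ]; exact Order.lt_succ ξ
  have hsξ' : s ∉ derivD D (derivIter (derivD D) H ξ) := by
    rw [← derivIter_succ (derivD D) H ξ, ← hξ]; exact notMem_derivIter_derivRank hα s
  simp only [derivD, Set.mem_ofPred_eq, not_and, not_forall, not_exists] at hsξ'
  obtain ⟨U, hU, hUξ⟩ := hsξ' hsξ
  refine ⟨U, hU, fun x hx => ?_⟩
  rw [hξ, Order.lt_succ_iff, ← not_lt, ← mem_derivIter_iff_lt_derivRank hα]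
  exact hUξ x hx

end DerivRank

theorem List.setOf_sublist_finite {Λ : Type*} (t : List Λ) : {s : List Λ | s.Sublist t}.Finite := by
  simpa only [List.mem_sublists] using t.sublists.finite_toSet

section Shuffle

variable {Λ : Type*} {D : Set (Set Λ)}

/-- Shuffles of a member of `I` and a member of `J`, the letters being dealt out by a colouring
of the alphabet rather than of positions. -/
def shuffleTree (I J : Set (List Λ)) : Set (List Λ) :=
  {t | ∃ c : Λ → Bool, t.filter c ∈ I ∧ t.filter (!c ·) ∈ J}

theorem exists_mem_forall_sublist_derivRank_concat_lt
    (hD : ∀ S : Set (Set Λ), S.Finite → S ⊆ D → ∃ U ∈ D, ∀ V ∈ S, U ⊆ V)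
    {H : Set (List Λ)} {α : Ordinal.{u}} (hα : derivIter (derivD D) H α = ∅) (t : List Λ) :
    ∃ U ∈ D, ∀ s, s.Sublist t → s ∈ H →
      ∀ x ∈ U, (derivRank D H (s ++ [x]) : Ordinal.{u}) < derivRank D H s := by
  choose! V hVD hV using fun s (hs : s ∈ H) => exists_mem_forall_derivRank_concat_lt hα hs
  obtain ⟨U, hUD, hU⟩ := hD (V '' {s | s.Sublist t ∧ s ∈ H})
    (((List.setOf_sublist_finite t).subset fun _ hs => hs.1).image V)
    (Set.image_subset_iff.mpr fun s hs => hVD s hs.2)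
  exact ⟨U, hUD, fun s hst hs x hx => hV s hs x (hU _ ⟨s, ⟨hst, hs⟩, rfl⟩ hx)⟩

theorem exists_colouring_lt_nadd_derivRank
    (hD : ∀ S : Set (Set Λ), S.Finite → S ⊆ D → ∃ U ∈ D, ∀ V ∈ S, U ⊆ V)
    {I J : Set (List Λ)} (hI : ∀ s x, s ++ [x] ∈ I → s ∈ I) (hJ : ∀ s x, s ++ [x] ∈ J → s ∈ J)
    {α β : Ordinal.{u}} (hα : derivIter (derivD D) I α = ∅) (hβ : derivIter (derivD D) J β = ∅)
    (γ : Ordinal.{u}) {t : List Λ} (ht : t ∈ derivIter (derivD D) (shuffleTree I J) γ) :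
    ∃ c : Λ → Bool, t.filter c ∈ I ∧ t.filter (!c ·) ∈ J ∧
      γ < Ordinal.nadd (derivRank D I (t.filter c)) (derivRank D J (t.filter (!c ·))) := by
  induction γ using Ordinal.limitRecOn generalizing t with
  | zero =>
    rw [derivIter_zero] at ht
    obtain ⟨c, hcI, hcJ⟩ := ht
    exact ⟨c, hcI, hcJ, (derivRank_pos hα hcI).trans_le (Ordinal.le_nadd_right _ _)⟩
  | add_one γ ih =>
    rw [← Order.succ_eq_add_one, derivIter_succ] at ht
    obtain ⟨UI, hUI, hrankI⟩ := exists_mem_forall_sublist_derivRank_concat_lt hD hα t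
    obtain ⟨UJ, hUJ, hrankJ⟩ := exists_mem_forall_sublist_derivRank_concat_lt hD hβ t
    obtain ⟨U, hU, hUsub⟩ := hD {UI, UJ} (by simp) (by simp [Set.insert_subset_iff, hUI, hUJ])
    obtain ⟨x, hxU, hx⟩ := ht.2 U hU
    obtain ⟨c, hcI, hcJ, hlt⟩ := ih hx
    cases hcx : c x
    all_goals simp only [List.filter_append, List.filter_singleton, hcx, cond_true, cond_false,
      Bool.not_true, Bool.not_false, List.append_nil] at hcI hcJ hlt
    · refine ⟨c, hcI, hJ _ x hcJ, (Order.succ_le_of_lt hlt).trans_lt ?_⟩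
      exact Ordinal.nadd_lt_nadd_left (hrankJ _ List.filter_sublist (hJ _ x hcJ) x
        (hUsub UJ (by simp) hxU)) _
    · refine ⟨c, hI _ x hcI, hcJ, (Order.succ_le_of_lt hlt).trans_lt ?_⟩
      exact Ordinal.nadd_lt_nadd_right (hrankI _ List.filter_sublist (hI _ x hcI) x
        (hUsub UI (by simp) hxU)) _
  | limit γ hγ ih =>
    rw [derivIter_limit _ _ hγ, Set.mem_iInter] at ht
    set P := {c : Λ → Bool | t.filter c ∈ I ∧ t.filter (!c ·) ∈ J}
    set F := fun c : Λ → Bool =>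
      Ordinal.nadd (derivRank D I (t.filter c)) (derivRank D J (t.filter (!c ·)))
    have hfin : (F '' P).Finite := by
      refine (((List.setOf_sublist_finite t).prod (List.setOf_sublist_finite t)).image
        fun q => Ordinal.nadd (derivRank D I q.1) (derivRank D J q.2)).subset ?_
      rintro _ ⟨c, -, rfl⟩
      exact ⟨(_, _), ⟨List.filter_sublist, List.filter_sublist⟩, rfl⟩
    have hP : ∀ c ∈ P, ¬Order.IsSuccLimit (F c) := fun c hc => by
      obtain ⟨ξ, hξ⟩ := exists_derivRank_eq_succ hβ hc.2
      change ¬Order.IsSuccLimit (Ordinal.nadd _ _)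
      rw [hξ]
      exact Ordinal.not_isSuccLimit_nadd_succ _ ξ
    simpa only [P, Set.mem_ofPred_eq, and_assoc] using
      Ordinal.exists_lt_of_isSuccLimit hfin hP hγ fun ζ hζ => by
        simpa only [P, Set.mem_ofPred_eq, and_assoc] using ih ζ hζ (ht ⟨ζ, hζ⟩)

end Shuffle

section WeakTrees

variable {X : Type*} [NormedAddCommGroup X] [NormedSpace ℝ X]

theorem weakBasis_directed (S : Set (Set X)) (hS : S.Finite) (hSX : S ⊆ weakBasis X) :
    ∃ U ∈ weakBasis X, ∀ V ∈ S, U ⊆ V := by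
  classical
  induction S, hS using Set.Finite.induction_on with
  | empty => exact ⟨Set.univ, ⟨∅, 1, one_pos, by simp⟩, by simp⟩
  | @insert V S _ _ ih =>
    obtain ⟨U, ⟨F, δ, hδ, rfl⟩, hU⟩ := ih ((Set.subset_insert V S).trans hSX)
    obtain ⟨G, η, hη, rfl⟩ := hSX (Set.mem_insert _ S)
    refine ⟨_, ⟨G ∪ F, min η δ, lt_min hη hδ, rfl⟩, Set.forall_mem_insert.mpr ⟨?_, ?_⟩⟩
    · exact fun x hx f hf => (hx f (Finset.mem_union_left _ hf)).trans_le (min_le_left _ _)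
    · exact fun W hW x hx => hU W hW fun f hf =>
        (hx f (Finset.mem_union_right _ hf)).trans_le (min_le_right _ _)

theorem mem_HKtree_of_sublist {K : Set (StrongDual ℝ X)} {ε : ℝ} {s t : List X}
    (hst : s.Sublist t) (ht : t ∈ HKtree K ε) : s ∈ HKtree K ε := by
  obtain ⟨hnorm, f, hfK, hf⟩ := ht
  exact ⟨fun x hx => hnorm x (hst.subset hx), f, hfK, fun x hx => hf x (hst.subset hx)⟩

theorem HKtree_add_subset_shuffleTree (K L : Set (StrongDual ℝ X)) (ε : ℝ) :
    HKtree (K + L) ε ⊆ shuffleTree (HKtree K (ε / 2)) (HKtree L (ε / 2)) := by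
  rintro t ⟨hnorm, _, ⟨g, hg, h, hh, rfl⟩, hgh⟩
  refine ⟨fun x => decide (ε / 2 ≤ g x),
    ⟨fun x hx => hnorm x (List.mem_of_mem_filter hx), g, hg, fun x hx => ?_⟩,
    ⟨fun x hx => hnorm x (List.mem_of_mem_filter hx), h, hh, fun x hx => ?_⟩⟩
  · simpa using (List.mem_filter.mp hx).2
  · obtain ⟨hxt, hgx⟩ := List.mem_filter.mp hx
    have hghx : ε ≤ g x + h x := hgh x hxt
    simp only [Bool.not_eq_eq_eq_not, Bool.not_true, decide_eq_false_iff_not, not_le] at hgx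
    linarith

end WeakTrees

theorem ordW_minkowski_nadd_general {X : Type*} [NormedAddCommGroup X] [NormedSpace ℝ X]
    (K L : Set (StrongDual ℝ X))
    (ε : ℝ) (α β : Ordinal)
    (hα : derivIter (derivD (weakBasis X)) (HKtree K (ε / 2)) α = ∅)
    (hβ : derivIter (derivD (weakBasis X)) (HKtree L (ε / 2)) β = ∅) :
    derivIter (derivD (weakBasis X)) (HKtree (K + L) ε) (Ordinal.nadd α β) = ∅ := by
  refine Set.eq_empty_of_forall_notMem fun t ht => ?_
  have hprefix (M : Set (StrongDual ℝ X)) (s : List X) (x : X) :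
      s ++ [x] ∈ HKtree M (ε / 2) → s ∈ HKtree M (ε / 2) :=
    mem_HKtree_of_sublist (List.sublist_append_left s [x])
  obtain ⟨c, -, -, hlt⟩ := exists_colouring_lt_nadd_derivRank weakBasis_directed
    (hprefix K) (hprefix L) hα hβ _
    (derivIter_mono (derivD_monotone _) (HKtree_add_subset_shuffleTree K L ε) _ ht)
  exact hlt.not_ge (Ordinal.nadd_le_nadd (derivRank_le hα _) (derivRank_le hβ _))

/-- `o_w(H^{K+L}_ε) ≤ o_w(H^K_{ε/2}) ⊕ o_w(H^L_{ε/2})` where `⊕` is the Hessenberg sum: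
if the weak derivative of `H^K_{ε/2}` is empty at `α` and that of `H^L_{ε/2}` is empty
at `β`, then the weak derivative of `H^{K+L}_ε` is empty at `α ⊕ β`. -/
theorem ordW_minkowski_nadd {X : Type*} [NormedAddCommGroup X] [NormedSpace ℝ X]
    [CompleteSpace X] (K L : Set (StrongDual ℝ X)) (hK : K.Nonempty) (hL : L.Nonempty)
    (hKc : IsCompact ((fun f => StrongDual.toWeakDual f) '' K))
    (hLc : IsCompact ((fun f => StrongDual.toWeakDual f) '' L))
    (ε : ℝ) (hε : 0 < ε) (α β : Ordinal)
    (hα : derivIter (derivD (weakBasis X)) (HKtree K (ε / 2)) α = ∅)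
    (hβ : derivIter (derivD (weakBasis X)) (HKtree L (ε / 2)) β = ∅) :
    derivIter (derivD (weakBasis X)) (HKtree (K + L) ε) (Ordinal.nadd α β) = ∅ :=
  ordW_minkowski_nadd_general K L ε α β hα hβ
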